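/- Let Σ be a complete fan in N_ℚ ≅ ℚ^n. Then the set of Demazure roots of Σ, namely 𝔯 = ⊔_{ρ ∈ Σ(1)} { m ∈ M : ⟨p_ρ, m⟩ = −1 and ⟨p_ρ', m⟩ ≥ 0 for all ρ' ∈ Σ(1) \ {ρ} }, is finite. -/

import Mathlib

/-!
A Demazure root `m` pairs to at least `-1` with every ray generator. Completeness writes every
`x` as a nonnegative combination `∑ cᵥ v` of ray generators, so `⟨x, m⟩ ≥ -∑ cᵥ` for every root
`m`. Taking `x = ±eᵢ` confines the roots to a bounded box of lattice points.
-/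

open Matrix

/-- The convex cone of nonnegative rational combinations of a finite set of vectors. -/
def coneOf {n : ℕ} (S : Finset (Fin n → ℚ)) : Set (Fin n → ℚ) :=
  { x | ∃ c : (Fin n → ℚ) → ℚ, (∀ v, 0 ≤ c v) ∧ x = ∑ v ∈ S, c v • v }

/-- `F` is a face of the cone `σ` cut out by a supporting linear functional. -/
def IsFaceOf {n : ℕ} (F σ : Set (Fin n → ℚ)) : Prop :=
  ∃ m : Fin n → ℚ, (∀ x ∈ σ, 0 ≤ m ⬝ᵥ x) ∧ F = {x ∈ σ | m ⬝ᵥ x = 0}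

/-- A rational polyhedral fan in `ℚ^n`, presented by the (primitive) generators of its
rays together with its collection of cones. -/
structure Fan (n : ℕ) where
  rays : Finset (Fin n → ℚ)
  cones : Set (Set (Fin n → ℚ))
  finite_cones : cones.Finite
  polyhedral : ∀ σ ∈ cones, ∃ S : Finset (Fin n → ℚ),
    ↑S ⊆ (rays : Set (Fin n → ℚ)) ∧ σ = coneOf S
  pointed : ∀ σ ∈ cones, σ ∩ (-σ) ⊆ {0}
  inter_face : ∀ σ ∈ cones, ∀ τ ∈ cones, IsFaceOf (σ ∩ τ) σ
  ray_mem : ∀ p ∈ rays, coneOf {p} ∈ cones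

/-- A fan is complete if its cones cover `ℚ^n`. -/
def Fan.IsComplete {n : ℕ} (F : Fan n) : Prop := ⋃ σ ∈ F.cones, σ = Set.univ

lemma finite_of_bddBelow_dotProduct {n : ℕ} {A : Set (Fin n → ℤ)}
    (h : ∀ x : Fin n → ℚ, BddBelow ((fun m : Fin n → ℤ => x ⬝ᵥ fun i => (m i : ℚ)) '' A)) :
    A.Finite := by
  choose lo hlo using fun i => h (Pi.single i 1)
  choose hi hhi using fun i => h (-Pi.single i 1)
  refine (Set.Finite.pi' fun i => Set.finite_Icc ⌈lo i⌉ ⌊-hi i⌋).subset fun m hm i => ?_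
  have hlo_i := hlo i ⟨m, hm, rfl⟩
  have hhi_i := hhi i ⟨m, hm, rfl⟩
  simp only [neg_dotProduct, single_dotProduct, one_mul] at hlo_i hhi_i
  exact ⟨Int.ceil_le.mpr hlo_i, Int.le_floor.mpr (by linarith)⟩

lemma bddBelow_dotProduct_of_mem_coneOf {n : ℕ} {S : Finset (Fin n → ℚ)} {x : Fin n → ℚ}
    (hx : x ∈ coneOf S) :
    BddBelow ((x ⬝ᵥ ·) '' {w | ∀ v ∈ S, -1 ≤ v ⬝ᵥ w}) := by
  obtain ⟨c, hc, rfl⟩ := hx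
  refine ⟨-∑ v ∈ S, c v, ?_⟩
  rintro _ ⟨w, hw, rfl⟩
  calc -∑ v ∈ S, c v = ∑ v ∈ S, c v * -1 := by simp
    _ ≤ ∑ v ∈ S, c v * (v ⬝ᵥ w) :=
        Finset.sum_le_sum fun v hv => mul_le_mul_of_nonneg_left (hw v hv) (hc v)
    _ = (∑ v ∈ S, c v • v) ⬝ᵥ w := by simp [sum_dotProduct]

lemma Fan.IsComplete.exists_mem_coneOf {n : ℕ} {F : Fan n} (hF : F.IsComplete)
    (x : Fin n → ℚ) : ∃ S ⊆ F.rays, x ∈ coneOf S := by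
  obtain ⟨σ, hσ, hxσ⟩ := Set.mem_iUnion₂.mp (hF ▸ Set.mem_univ x)
  obtain ⟨S, hS, rfl⟩ := F.polyhedral σ hσ
  exact ⟨S, Finset.coe_subset.mp hS, hxσ⟩

lemma Fan.IsComplete.bddBelow_dotProduct {n : ℕ} {F : Fan n} (hF : F.IsComplete)
    (x : Fin n → ℚ) :
    BddBelow ((x ⬝ᵥ ·) '' {w | ∀ v ∈ F.rays, -1 ≤ v ⬝ᵥ w}) := by
  obtain ⟨S, hS, hx⟩ := hF.exists_mem_coneOf x
  exact (bddBelow_dotProduct_of_mem_coneOf hx).mono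
    (Set.image_mono fun w hw v hv => hw v (hS hv))

/-- the set of Demazure roots of a complete fan is finite. -/
theorem demazureRoots_finite {n : ℕ} (F : Fan n) (hF : F.IsComplete) :
    { m : Fin n → ℤ | ∃ p ∈ F.rays,
        p ⬝ᵥ (fun i => (m i : ℚ)) = -1 ∧
        ∀ q ∈ F.rays, q ≠ p → 0 ≤ q ⬝ᵥ (fun i => (m i : ℚ)) }.Finite := by
  refine Set.Finite.subset (s := {m | ∀ v ∈ F.rays, -1 ≤ v ⬝ᵥ fun i => (m i : ℚ)}) ?_ ?_
  · refine finite_of_bddBelow_dotProduct fun x => (hF.bddBelow_dotProduct x).mono ?_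
    rintro _ ⟨m, hm, rfl⟩
    exact ⟨_, hm, rfl⟩
  · rintro m ⟨p, -, hp, hq⟩ v hv
    obtain rfl | hvp := eq_or_ne v p
    · exact hp.ge
    · linarith [hq v hv hvp]
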